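/- For the closed curve of subspaces Π(t) = exp(-iπt S_y)(Π_NOT), t ∈ [0,1], the Wilczek–Zee holonomy U_geo = P F^{-1} equals the NOT gate σ_x (up to a global phase), where P is the polar part of the overlap matrix Q_{ij} = ⟨φ_i(0)|φ_j(1)⟩ and F is the path-ordered exponential of the WZ connection. -/

import Mathlib

open Matrix Complex

/-- Spin-2 raising operator on ℂ⁵ in the basis |2,2⟩,…,|2,-2⟩ (index i ↔ m = 2 - i). -/
noncomputable def Splus : Matrix (Fin 5) (Fin 5) ℂ :=
  Matrix.of fun i j =>
    if (i : ℕ) + 1 = (j : ℕ) then ((Real.sqrt ((j : ℕ) * (5 - (j : ℕ))) : ℝ) : ℂ) else 0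

noncomputable def Sminus : Matrix (Fin 5) (Fin 5) ℂ := Splus.conjTranspose

noncomputable def Sx : Matrix (Fin 5) (Fin 5) ℂ := (1 / 2 : ℂ) • (Splus + Sminus)

noncomputable def Sy : Matrix (Fin 5) (Fin 5) ℂ := (-Complex.I / 2) • (Splus - Sminus)

noncomputable def Sz : Matrix (Fin 5) (Fin 5) ℂ :=
  Matrix.diagonal fun i : Fin 5 => (2 : ℂ) - (i : ℕ)

/-- ψ₁ = (1/√3)(1,0,0,√2,0). -/
noncomputable def ψ1 : Fin 5 → ℂ := fun i =>
  ((Real.sqrt 3)⁻¹ : ℝ) * ![1, 0, 0, ((Real.sqrt 2 : ℝ) : ℂ), 0] i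

/-- ψ₂ = (1/√3)(0,-√2,0,0,1). -/
noncomputable def ψ2 : Fin 5 → ℂ := fun i =>
  ((Real.sqrt 3)⁻¹ : ℝ) * ![0, -((Real.sqrt 2 : ℝ) : ℂ), 0, 0, 1] i

/-- The curve of rotations t ↦ exp(-iπt S_y) applied to Π_NOT. -/
noncomputable def Ut (t : ℝ) : Matrix (Fin 5) (Fin 5) ℂ :=
  NormedSpace.exp ((-Complex.I * (Real.pi : ℂ) * (t : ℂ)) • Sy)

noncomputable def ψ : Fin 2 → (Fin 5 → ℂ) := ![ψ1, ψ2]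

/-- Overlap matrix Q_{ij} = ⟨ψ_i | exp(-iπ S_y) | ψ_j⟩. -/
noncomputable def Q : Matrix (Fin 2) (Fin 2) ℂ :=
  Matrix.of fun i j => star (ψ i) ⬝ᵥ (Ut 1 *ᵥ ψ j)

/-! Since exp(-iπtS_y) is unitary and commutes with its generator, the connection
⟨φ_i(t)|φ̇_j(t)⟩ reduces to -iπ⟨ψ_i|S_y|ψ_j⟩, which vanishes because Π_NOT is 1-anticoherent.
Diagonalising S_y (its eigenvalues 2, …, -2 are integers, so all phases e^{-iπm} are ±1) shows
that exp(-iπS_y) sends |m⟩ to (-1)^{2-m}|-m⟩; it therefore swaps ψ₁ and ψ₂, and by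
orthonormality of ψ₁, ψ₂ the overlap matrix Q is exactly σ_x. -/

open Real

namespace Matrix

variable {n : Type*} [Fintype n] [DecidableEq n]

theorem exp_mem_unitaryGroup_of_conjTranspose_eq_neg {A : Matrix n n ℂ} (hA : Aᴴ = -A) :
    NormedSpace.exp A ∈ unitaryGroup n ℂ := by
  rw [mem_unitaryGroup_iff', star_eq_conjTranspose, ← exp_conjTranspose, hA,
    ← exp_add_of_commute _ _ (Commute.refl A).neg_left, neg_add_cancel, NormedSpace.exp_zero]

theorem star_mulVec_dotProduct_mulVec_of_mem_unitaryGroup {U : Matrix n n ℂ}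
    (hU : U ∈ unitaryGroup n ℂ) (v w : n → ℂ) :
    star (U *ᵥ v) ⬝ᵥ (U *ᵥ w) = star v ⬝ᵥ w := by
  rw [star_mulVec, ← dotProduct_mulVec, mulVec_mulVec, ← star_eq_conjTranspose,
    (mem_unitaryGroup_iff').mp hU, one_mulVec]

theorem exp_eq_mul_exp_mul_conjTranspose {A D R : Matrix n n ℂ} (hR : R ∈ unitaryGroup n ℂ)
    (h : A * R = R * D) : NormedSpace.exp A = R * NormedSpace.exp D * Rᴴ := by
  let U : (Matrix n n ℂ)ˣ := ⟨R, Rᴴ, mem_unitaryGroup_iff.mp hR, mem_unitaryGroup_iff'.mp hR⟩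
  have hA : A = R * D * Rᴴ := by
    rw [← h, Matrix.mul_assoc, ← star_eq_conjTranspose, mem_unitaryGroup_iff.mp hR, mul_one]
  rw [hA]
  exact exp_units_conj U D

theorem star_mulVec_dotProduct_mul_mulVec_of_commute {A U : Matrix n n ℂ}
    (hU : U ∈ unitaryGroup n ℂ) (hAU : Commute A U) (v w : n → ℂ) :
    star (U *ᵥ v) ⬝ᵥ ((A * U) *ᵥ w) = star v ⬝ᵥ (A *ᵥ w) := by
  rw [hAU.eq, ← mulVec_mulVec, star_mulVec_dotProduct_mulVec_of_mem_unitaryGroup hU]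

end Matrix

theorem Complex.ofReal_sqrt_sq {x : ℝ} (hx : 0 ≤ x) : ((√x : ℝ) : ℂ) ^ 2 = x := by
  rw [← ofReal_pow, Real.sq_sqrt hx]

lemma Splus_eq : Splus = !![0, 2, 0, 0, 0; 0, 0, ((√6 : ℝ) : ℂ), 0, 0;
    0, 0, 0, ((√6 : ℝ) : ℂ), 0; 0, 0, 0, 0, 2; 0, 0, 0, 0, 0] := by
  have h4 : √4 = 2 := by
    rw [show (4 : ℝ) = 2 ^ 2 by norm_num, Real.sqrt_sq zero_le_two]
  have h6 : ((√2 : ℝ) : ℂ) * ((√3 : ℝ) : ℂ) = ((√6 : ℝ) : ℂ) := by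
    rw [← ofReal_mul, ← Real.sqrt_mul zero_le_two]
    norm_num
  ext i j
  fin_cases i <;> fin_cases j <;> norm_num [Splus, h4, h6, mul_comm ((√3 : ℝ) : ℂ)]

lemma Sy_eq : Sy = !![0, -I, 0, 0, 0;
    I, 0, -I * ((√6 : ℝ) : ℂ) / 2, 0, 0;
    0, I * ((√6 : ℝ) : ℂ) / 2, 0, -I * ((√6 : ℝ) : ℂ) / 2, 0;
    0, 0, I * ((√6 : ℝ) : ℂ) / 2, 0, -I;
    0, 0, 0, I, 0] := by
  ext i j
  fin_cases i <;> fin_cases j <;> simp [Sy, Sminus, Splus_eq] <;> ring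

lemma Sy_isHermitian : Sy.IsHermitian := by
  rw [IsHermitian, Sy_eq]
  ext i j
  fin_cases i <;> fin_cases j <;> simp

lemma Ut_mem_unitaryGroup (t : ℝ) : Ut t ∈ unitaryGroup (Fin 5) ℂ := by
  refine exp_mem_unitaryGroup_of_conjTranspose_eq_neg ?_
  rw [conjTranspose_smul, Sy_isHermitian.eq, ← neg_smul]
  congr 1
  simp

lemma star_ψ_dotProduct_Sy_mulVec_ψ (i j : Fin 2) : star (ψ i) ⬝ᵥ (Sy *ᵥ ψ j) = 0 := by
  rw [Sy_eq]
  fin_cases i <;> fin_cases j <;>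
    simp [ψ, ψ1, ψ2, mulVec, dotProduct, Fin.sum_univ_five] <;> ring_nf

noncomputable def eigenbasisSy : Matrix (Fin 5) (Fin 5) ℂ := (1 / 4 : ℂ) •
  !![-1, 2, -((√6 : ℝ) : ℂ), 2, -1;
     -2 * I, 2 * I, 0, -2 * I, 2 * I;
     ((√6 : ℝ) : ℂ), 0, -2, 0, ((√6 : ℝ) : ℂ);
     2 * I, 2 * I, 0, -2 * I, -2 * I;
     -1, -2, -((√6 : ℝ) : ℂ), -2, -1]

lemma eigenbasisSy_mem_unitaryGroup : eigenbasisSy ∈ unitaryGroup (Fin 5) ℂ := by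
  rw [mem_unitaryGroup_iff]
  ext i j
  fin_cases i <;> fin_cases j <;>
    simp [eigenbasisSy, mul_apply, Fin.sum_univ_five, map_ofNat] <;> ring_nf <;>
    norm_num [ofReal_sqrt_sq]

lemma Sy_mul_eigenbasisSy : Sy * eigenbasisSy = eigenbasisSy * Sz := by
  rw [Sy_eq]
  ext i j
  fin_cases i <;> fin_cases j <;>
    simp [eigenbasisSy, Sz, mul_apply, Fin.sum_univ_five] <;> ring_nf <;>
    norm_num [ofReal_sqrt_sq] <;> ring_nf

lemma exp_neg_pi_I_smul_Sz :
    NormedSpace.exp ((-I * π) • Sz) = diagonal ![1, -1, 1, -1, 1] := by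
  rw [Sz, ← diagonal_smul, exp_diagonal]
  congr 1
  ext i
  rw [Pi.exp_def, ← Complex.exp_eq_exp_ℂ]
  change Complex.exp (-I * π * (2 - (i : ℕ))) = _
  rw [show -I * π * (2 - (i : ℕ)) = (((i : ℕ) - 2 : ℤ) : ℂ) * (π * I) by push_cast; ring,
    Complex.exp_int_mul, Complex.exp_pi_mul_I]
  fin_cases i <;> norm_num

lemma Ut_one : Ut 1 = !![0, 0, 0, 0, 1; 0, 0, 0, -1, 0; 0, 0, 1, 0, 0; 0, -1, 0, 0, 0;
    1, 0, 0, 0, 0] := by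
  have hconj : ((-I * π * ((1 : ℝ) : ℂ)) • Sy) * eigenbasisSy =
      eigenbasisSy * ((-I * π) • Sz) := by
    rw [ofReal_one, mul_one, smul_mul_assoc, mul_smul_comm, Sy_mul_eigenbasisSy]
  rw [Ut, exp_eq_mul_exp_mul_conjTranspose eigenbasisSy_mem_unitaryGroup hconj,
    exp_neg_pi_I_smul_Sz]
  ext i j
  fin_cases i <;> fin_cases j <;>
    simp [eigenbasisSy, mul_apply, vecMul_diagonal, Fin.sum_univ_five, map_ofNat] <;> ring_nf <;>
    norm_num [ofReal_sqrt_sq]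

lemma star_ψ_dotProduct_ψ (i j : Fin 2) : star (ψ i) ⬝ᵥ ψ j = if i = j then 1 else 0 := by
  fin_cases i <;> fin_cases j <;>
    simp [ψ, ψ1, ψ2, dotProduct, Fin.sum_univ_five] <;> ring_nf <;> norm_num [ofReal_sqrt_sq]

lemma Ut_one_mulVec_ψ (j : Fin 2) : Ut 1 *ᵥ ψ j = ψ j.rev := by
  rw [Ut_one]
  ext k
  fin_cases j <;> fin_cases k <;> simp [ψ, ψ1, ψ2, mulVec, dotProduct, Fin.sum_univ_five]

lemma Q_eq : Q = !![0, 1; 1, 0] := by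
  ext i j
  rw [Q, of_apply, Ut_one_mulVec_ψ, star_ψ_dotProduct_ψ]
  fin_cases i <;> fin_cases j <;> rfl

/-- The first conjunct is the vanishing of the Wilczek–Zee connection
A_{ij}(t) = ⟨φ_i(t)|φ̇_j(t)⟩, since φ̇_j(t) = (-iπS_y) exp(-iπtS_y) ψ_j (so F = Id); the second
makes the polar part of Q equal to Q itself, so that U_geo = Q. -/
theorem toponomic_NOT :
    (∀ (t : ℝ) (i j : Fin 2),
        star (Ut t *ᵥ ψ i) ⬝ᵥ
          ((((-Complex.I * (Real.pi : ℂ)) • Sy) * Ut t) *ᵥ ψ j) = 0) ∧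
    Q ∈ Matrix.unitaryGroup (Fin 2) ℂ ∧
    ∃ c : ℂ, ‖c‖ = 1 ∧ Q = c • !![0, 1; 1, 0] := by
  refine ⟨fun t i j => ?_, ?_, 1, norm_one, by rw [Q_eq, one_smul]⟩
  · have hcomm : Commute ((-I * π) • Sy) (Ut t) :=
      (((Commute.refl Sy).smul_left _).smul_right _).exp_right
    rw [star_mulVec_dotProduct_mul_mulVec_of_commute (Ut_mem_unitaryGroup t) hcomm,
      smul_mulVec, dotProduct_smul, star_ψ_dotProduct_Sy_mulVec_ψ, smul_zero]
  · rw [Q_eq, mem_unitaryGroup_iff]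
    ext i j
    fin_cases i <;> fin_cases j <;> simp [mul_apply]
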